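/- Let {aᵢ ⊗ bᵢ : i = 1…d} be an orthonormal product basis of ℂ² ⊗ ℂ^{d₂}, d = 2d₂. Then for every index κ ∈ {1…d} there exists an index λ ∈ {1…d} such that {a_κ, a_λ} is an orthonormal basis of ℂ². -/

import Mathlib

/-!
Fix `κ` and a nonzero `c ⊥ a κ`. The product basis spans, so some `a l ⊗ b l` is not orthogonal
to `c ⊗ b κ`, i.e. `⟪a l, c⟫ ⟪b l, b κ⟫ ≠ 0`. Then `l ≠ κ`, and the orthogonality
`⟪a κ, a l⟫ ⟪b κ, b l⟫ = 0` of the basis forces `⟪a κ, a l⟫ = 0`; two orthonormal vectors in `ℂ²`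
form a basis.
-/

open scoped ComplexInnerProductSpace

/-- The tensor product of two vectors, realized concretely on `EuclideanSpace`:
`(a ⊗ b) (i, j) = a i * b j`. -/
noncomputable def eprod {ι γ : Type*} (a : EuclideanSpace ℂ ι) (b : EuclideanSpace ℂ γ) :
    EuclideanSpace ℂ (ι × γ) :=
  WithLp.toLp 2 (fun p => a p.1 * b p.2)

open Module

section
variable {𝕜 E : Type*} [RCLike 𝕜] [NormedAddCommGroup E] [InnerProductSpace 𝕜 E]
  [FiniteDimensional 𝕜 E]

theorem exists_ne_zero_inner_eq_zero (h : 1 < finrank 𝕜 E) (x : E) :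
    ∃ c : E, c ≠ 0 ∧ inner 𝕜 x c = 0 := by
  have hle : finrank 𝕜 (𝕜 ∙ x) ≤ 1 := by
    simpa using finrank_span_le_card (R := 𝕜) ({x} : Set E)
  have hK : (𝕜 ∙ x)ᗮ ≠ ⊥ := by
    intro hbot
    have := (𝕜 ∙ x).finrank_add_finrank_orthogonal
    rw [hbot, finrank_bot] at this
    omega
  obtain ⟨c, hc, hc0⟩ := Submodule.exists_mem_ne_zero_of_ne_bot hK
  exact ⟨c, hc0, Submodule.mem_orthogonal_singleton_iff_inner_right.mp hc⟩

theorem LinearIndependent.exists_inner_ne_zero_of_card_eq_finrank {ι : Type*} [Fintype ι]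
    {v : ι → E} (hv : LinearIndependent 𝕜 v) (hcard : Fintype.card ι = finrank 𝕜 E)
    {w : E} (hw : w ≠ 0) : ∃ i, inner 𝕜 (v i) w ≠ 0 := by
  by_contra! h
  exact hw <| InnerProductSpace.ext_inner_left_basis
    (basisOfLinearIndependentOfCardEqFinrank' v hv hcard) fun i => by simp [h i]

theorem Orthonormal.span_pair_eq_top (h : finrank 𝕜 E = 2) {x y : E}
    (hxy : Orthonormal 𝕜 ![x, y]) : Submodule.span 𝕜 {x, y} = ⊤ := by
  rw [← hxy.linearIndependent.span_eq_top_of_card_eq_finrank' (by simp [h]),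
    Matrix.range_cons, Matrix.range_cons, Matrix.range_empty]
  simp only [Set.union_empty, Set.singleton_union]

end

section eprod
variable {ι γ : Type*} [Fintype ι] [Fintype γ]

theorem inner_eprod (a a' : EuclideanSpace ℂ ι) (b b' : EuclideanSpace ℂ γ) :
    ⟪eprod a b, eprod a' b'⟫ = ⟪a, a'⟫ * ⟪b, b'⟫ := by
  simp only [eprod, PiLp.inner_apply, RCLike.inner_apply, map_mul, Fintype.sum_prod_type,
    Finset.sum_mul_sum, mul_mul_mul_comm]

theorem eprod_eq_zero_iff {a : EuclideanSpace ℂ ι} {b : EuclideanSpace ℂ γ} :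
    eprod a b = 0 ↔ a = 0 ∨ b = 0 := by
  rw [← inner_self_eq_zero (𝕜 := ℂ), inner_eprod, mul_eq_zero, inner_self_eq_zero,
    inner_self_eq_zero]

theorem Orthonormal.exists_left_factor_inner_eq_zero {n : Type*} [Fintype n]
    {a : n → EuclideanSpace ℂ ι} {b : n → EuclideanSpace ℂ γ}
    (hB : Orthonormal ℂ fun i => eprod (a i) (b i))
    (hcard : Fintype.card n = Fintype.card ι * Fintype.card γ) (hι : 1 < Fintype.card ι)
    (k : n) : ∃ l, ⟪a k, a l⟫ = 0 := by
  obtain ⟨c, hc, hkc⟩ := exists_ne_zero_inner_eq_zero (𝕜 := ℂ) (by simpa using hι) (a k)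
  have hbk : b k ≠ 0 := fun h => hB.ne_zero k (eprod_eq_zero_iff.mpr (Or.inr h))
  obtain ⟨l, hl⟩ := hB.linearIndependent.exists_inner_ne_zero_of_card_eq_finrank
    (by simpa using hcard) (eprod_eq_zero_iff.not.mpr (not_or.mpr ⟨hc, hbk⟩))
  rw [inner_eprod, mul_ne_zero_iff] at hl
  have hlk : l ≠ k := by
    rintro rfl
    exact hl.1 hkc
  have hkl := hB.inner_eq_zero hlk.symm
  rw [inner_eprod, mul_eq_zero] at hkl
  exact ⟨l, hkl.resolve_right fun h => hl.2 (inner_eq_zero_symm.mp h)⟩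

end eprod

theorem qubit_factor_contains_orthonormal_basis_general {d₂ : ℕ}
    (a : Fin (2 * d₂) → EuclideanSpace ℂ (Fin 2))
    (b : Fin (2 * d₂) → EuclideanSpace ℂ (Fin d₂))
    (ha : ∀ i, ‖a i‖ = 1)
    (hB : Orthonormal ℂ (fun i => eprod (a i) (b i))) :
    ∀ κ, ∃ l, Orthonormal ℂ ![a κ, a l] ∧
      Submodule.span ℂ {a κ, a l} = ⊤ := by
  intro κ
  obtain ⟨l, hκl⟩ := hB.exists_left_factor_inner_eq_zero (by simp) (by simp) κ
  have hon : Orthonormal ℂ ![a κ, a l] := by simp [ha, hκl]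
  exact ⟨l, hon, hon.span_pair_eq_top (by simp)⟩

/-- For an orthonormal product basis `{aᵢ ⊗ bᵢ : i = 1…d}` of `ℂ² ⊗ ℂ^{d₂}`, `d = 2d₂`,
and every index `κ`, there is an index `λ` such that `{a_κ, a_λ}` is an orthonormal basis
of `ℂ²`. -/
theorem qubit_factor_contains_orthonormal_basis {d₂ : ℕ} (hd₂ : 0 < d₂)
    (a : Fin (2 * d₂) → EuclideanSpace ℂ (Fin 2))
    (b : Fin (2 * d₂) → EuclideanSpace ℂ (Fin d₂))
    (ha : ∀ i, ‖a i‖ = 1) (hb : ∀ i, ‖b i‖ = 1)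
    (hB : Orthonormal ℂ (fun i => eprod (a i) (b i))) :
    ∀ κ, ∃ l, Orthonormal ℂ ![a κ, a l] ∧
      Submodule.span ℂ {a κ, a l} = ⊤ :=
  qubit_factor_contains_orthonormal_basis_general a b ha hB
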